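/- arXiv:2502.12626 — 2 statements merged into one kernel-verified Lean document; each statement's English description precedes it below -/
import Mathlib

section
/- Let p ∈ (2,3) and ρ > 0. The functional I(u) = ½∫_{R³}|∇u|² dx + ¼∫_{R³} ϕ_u u² dx − (1/p)∫_{R³}|u|^p dx is bounded from below and coercive on the constraint M_ρ = {u ∈ H^1(R³) : ∫ u² = ρ²}; i.e., there is m ∈ R with I(u) ≥ m for all u ∈ M_ρ, and I(u_n) → +∞ whenever ‖u_n‖_{H^1} → ∞ with u_n ∈ M_ρ. -/
open MeasureTheory Real Filter

noncomputable section

abbrev E3 := EuclideanSpace ℝ (Fin 3)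

/-- Membership in `H¹(ℝ³)`. -/
def InH1 (u : E3 → ℝ) : Prop :=
  Differentiable ℝ u ∧ MemLp u 2 volume ∧
    MemLp (fun x => ‖fderiv ℝ u x‖) 2 volume

/-- The Schrödinger–Poisson energy on `ℝ³`, with the Newtonian-potential
(nonlocal) term written as a double integral
`∫ ϕ_u u² = ∫∫ (4π|x-y|)⁻¹ u²(x)u²(y)`. -/
def Ifull (p : ℝ) (u : E3 → ℝ) : ℝ :=
  (1 / 2) * (∫ x, ‖fderiv ℝ u x‖ ^ 2) +
    (1 / 4) * (∫ x, ∫ y, (4 * π * ‖x - y‖)⁻¹ * (u x) ^ 2 * (u y) ^ 2) -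
    (1 / p) * (∫ x, |u x| ^ p)

/-!
The nonlocal term is nonnegative, so everything rests on the bound
`∫ |u|^p ≤ |u|₂^{2(3-p)} (|u|₂² + 2 |u|₂ |∇u|₂)^{3(p-2)/2}` for `u ∈ H¹(ℝ³)` and `2 ≤ p ≤ 3`.
On `M_ρ` its right-hand side grows like `|∇u|₂^{3(p-2)/2}` with `3(p-2)/2 < 2`, so it is absorbed
by `¼ |∇u|₂²`, and `I(u) ≥ ¼ |∇u|₂² - K`; both claims follow.

The bound is Hölder interpolation between `L²` and `L³`, combined with a Gagliardo–Nirenberg–Sobolev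
inequality `∫ |u|³ ≤ (∫ u² + 2 |u| |∇u|)^{3/2}` that needs no decay of `u`: on every coordinate
line, `u(x)²` is compared with its mean over a unit segment ending at `x`, which bounds it by
`∫ (u² + |∂ᵢ(u²)|)` along that line, and the Loomis–Whitney-type inequality
`lintegral_prod_lintegral_pow_le` multiplies the three line bounds.
-/

open scoped ENNReal
open Function Set

theorem ofReal_le_lintegral_add_abs_deriv {w : ℝ → ℝ} (hw : Differentiable ℝ w) (hw₀ : 0 ≤ w)
    (a : ℝ) : ENNReal.ofReal (w a) ≤ ∫⁻ t, ENNReal.ofReal (w t + |deriv w t|) := by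
  set φ : ℝ → ℝ := fun t => w t + |deriv w t|
  have hφ0 : 0 ≤ φ := fun t => add_nonneg (hw₀ t) (abs_nonneg _)
  refine le_trans ?_ (setLIntegral_le_lintegral (Ioc (a - 1) a) _)
  by_cases hfin : ∫⁻ t in Ioc (a - 1) a, ENNReal.ofReal (φ t) = ∞
  · simp [φ, hfin]
  have hφint : IntegrableOn φ (Ioc (a - 1) a) :=
    ⟨(hw.continuous.measurable.add (measurable_deriv w).abs).aestronglyMeasurable,
      (hasFiniteIntegral_iff_ofReal (ae_of_all _ hφ0)).2 (lt_top_iff_ne_top.2 hfin)⟩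
  have hφint' : IntegrableOn φ (Icc (a - 1) a) :=
    (integrableOn_Icc_iff_integrableOn_Ioc).mpr hφint
  -- `w a = g a - g (a - 1)` for `g t = (t - (a - 1)) * w t`, and `g' ≤ φ` on `[a - 1, a]`
  have hle : w a ≤ ∫ t in (a - 1)..a, φ t := by
    have := intervalIntegral.sub_le_integral_of_hasDeriv_right_of_le (a := a - 1) (b := a)
      (g := fun t => (t - (a - 1)) * w t) (g' := fun t => w t + (t - (a - 1)) * deriv w t)
      (by linarith) ((continuous_id.sub continuous_const).mul hw.continuous).continuousOn
      (fun t _ => ((((hasDerivAt_id t).sub_const (a - 1)).mul (hw t).hasDerivAt).congr_deriv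
        (by simp)).hasDerivWithinAt)
      hφint'
      (fun t ht => by
        have ht₀ : 0 ≤ t - (a - 1) := by linarith [ht.1]
        have ht₁ : t - (a - 1) ≤ 1 := by linarith [ht.2]
        simp only [φ]
        nlinarith [le_abs_self (deriv w t), neg_abs_le (deriv w t), abs_nonneg (deriv w t)])
    simpa using this
  rw [intervalIntegral.integral_of_le (by linarith)] at hle
  rw [← ofReal_integral_eq_lintegral_ofReal hφint (ae_of_all _ hφ0)]
  exact ENNReal.ofReal_le_ofReal hle

theorem lintegral_enorm_sq_eq_eLpNorm_sq {α F : Type*} [MeasurableSpace α] {μ : Measure α}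
    [NormedAddCommGroup F] (f : α → F) : ∫⁻ x, ‖f x‖ₑ ^ 2 ∂μ = eLpNorm f 2 μ ^ 2 := by
  rw [eLpNorm_eq_lintegral_rpow_enorm_toReal two_ne_zero ENNReal.ofNat_ne_top,
    ← ENNReal.rpow_natCast, ← ENNReal.rpow_mul]
  simp

theorem lintegral_enorm_mul_le_eLpNorm_mul_eLpNorm {α F G : Type*} [MeasurableSpace α]
    {μ : Measure α} [NormedAddCommGroup F] [NormedAddCommGroup G] {f : α → F} {g : α → G}
    (hf : AEStronglyMeasurable f μ) (hg : AEStronglyMeasurable g μ) :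
    ∫⁻ x, ‖f x‖ₑ * ‖g x‖ₑ ∂μ ≤ eLpNorm f 2 μ * eLpNorm g 2 μ := by
  simpa [eLpNorm_eq_lintegral_rpow_enorm_toReal two_ne_zero ENNReal.ofNat_ne_top] using
    ENNReal.lintegral_mul_le_Lp_mul_Lq μ Real.HolderConjugate.two_two hf.enorm hg.enorm

theorem eLpNorm_two_eq_ofReal_sqrt_integral {α F : Type*} [MeasurableSpace α] {μ : Measure α}
    [NormedAddCommGroup F] {f : α → F} (hf : MemLp f 2 μ) :
    eLpNorm f 2 μ = ENNReal.ofReal √(∫ x, ‖f x‖ ^ 2 ∂μ) := by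
  rw [hf.eLpNorm_eq_integral_rpow_norm two_ne_zero ENNReal.ofNat_ne_top, Real.sqrt_eq_rpow]
  norm_num

theorem lintegral_rpow_convexComb_le {α : Type*} [MeasurableSpace α] {μ : Measure α}
    {f : α → ℝ≥0∞} (hf : AEMeasurable f μ) {a b θ : ℝ} (ha : 0 ≤ a) (hb : 0 ≤ b)
    (hθ₀ : 0 ≤ θ) (hθ₁ : θ ≤ 1) :
    ∫⁻ x, f x ^ ((1 - θ) * a + θ * b) ∂μ ≤
      (∫⁻ x, f x ^ a ∂μ) ^ (1 - θ) * (∫⁻ x, f x ^ b ∂μ) ^ θ := by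
  have hsplit (x : α) : f x ^ ((1 - θ) * a + θ * b) = (f x ^ a) ^ (1 - θ) * (f x ^ b) ^ θ := by
    rw [← ENNReal.rpow_mul, ← ENNReal.rpow_mul, ← ENNReal.rpow_add_of_nonneg _ _
      (by nlinarith) (by positivity), mul_comm a, mul_comm b]
  simp_rw [hsplit]
  exact ENNReal.lintegral_mul_norm_pow_le (hf.pow_const a) (hf.pow_const b) (by linarith) hθ₀
    (by ring)

section W11

variable {E : Type*} [NormedAddCommGroup E] [NormedSpace ℝ E]

-- a pointwise majorant of `|u²| + |∇(u²)|`, the `W^{1,1}` density of `u²`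
def sqW11Density (u : E → ℝ) (x : E) : ℝ≥0∞ :=
  ‖u x‖ₑ ^ 2 + 2 * ‖u x‖ₑ * ‖fderiv ℝ u x‖ₑ

theorem sqW11Density_eq_ofReal (u : E → ℝ) (x : E) :
    sqW11Density u x = ENNReal.ofReal (u x ^ 2 + 2 * |u x| * ‖fderiv ℝ u x‖) := by
  rw [ENNReal.ofReal_add (sq_nonneg _) (by positivity), ENNReal.ofReal_mul (by positivity),
    ENNReal.ofReal_mul zero_le_two, ← sq_abs, ENNReal.ofReal_pow (abs_nonneg _), ofReal_norm,
    ← Real.enorm_eq_ofReal_abs, ENNReal.ofReal_ofNat, sqW11Density]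

theorem measurable_sqW11Density [MeasurableSpace E] [OpensMeasurableSpace E] {u : E → ℝ}
    (hu : Continuous u) :
    Measurable (sqW11Density u) := by
  unfold sqW11Density
  have := measurable_fderiv ℝ u
  fun_prop

theorem lintegral_sqW11Density_le [FiniteDimensional ℝ E] [MeasurableSpace E] [BorelSpace E]
    (μ : Measure E) {u : E → ℝ} (hu : Continuous u) :
    ∫⁻ x, sqW11Density u x ∂μ ≤
      eLpNorm u 2 μ ^ 2 + 2 * eLpNorm u 2 μ * eLpNorm (fderiv ℝ u) 2 μ := by
  simp only [sqW11Density, mul_assoc]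
  rw [lintegral_add_left (hu.measurable.enorm.pow_const 2),
    lintegral_const_mul' _ _ ENNReal.ofNat_ne_top, lintegral_enorm_sq_eq_eLpNorm_sq]
  gcongr
  exact lintegral_enorm_mul_le_eLpNorm_mul_eLpNorm hu.aestronglyMeasurable
    (measurable_fderiv ℝ u).aestronglyMeasurable

end W11

theorem enorm_sq_le_lintegral_sqW11Density_update {ι : Type*} [Fintype ι] [DecidableEq ι]
    {u : EuclideanSpace ℝ ι → ℝ} (hu : Differentiable ℝ u) (y : ι → ℝ) (i : ι) :
    ‖u (WithLp.toLp 2 y)‖ₑ ^ 2 ≤ ∫⁻ t, sqW11Density u (WithLp.toLp 2 (update y i t)) := by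
  set γ : ℝ → EuclideanSpace ℝ ι := fun t => WithLp.toLp 2 (update y i t)
  set e : EuclideanSpace ℝ ι := WithLp.toLp 2 (Pi.single i 1)
  have hγ (t : ℝ) : HasDerivAt γ e t :=
    (EuclideanSpace.equiv ι ℝ).symm.hasFDerivAt.comp_hasDerivAt t (hasDerivAt_update y i t)
  have hw (t : ℝ) : HasDerivAt (fun t => u (γ t) ^ 2) (2 * u (γ t) * fderiv ℝ u (γ t) e) t := by
    simpa using ((hu (γ t)).hasFDerivAt.comp_hasDerivAt t (hγ t)).fun_pow 2
  have hbound (t : ℝ) : ENNReal.ofReal (u (γ t) ^ 2 + |deriv (fun t => u (γ t) ^ 2) t|) ≤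
      sqW11Density u (γ t) := by
    have hD : |fderiv ℝ u (γ t) e| ≤ ‖fderiv ℝ u (γ t)‖ := by
      simpa [e] using (fderiv ℝ u (γ t)).le_opNorm e
    rw [(hw t).deriv, sqW11Density_eq_ofReal, abs_mul, abs_mul, abs_two, mul_assoc, mul_assoc]
    gcongr
  calc ‖u (WithLp.toLp 2 y)‖ₑ ^ 2 = ENNReal.ofReal (u (γ (y i)) ^ 2) := by
        simp [γ, Real.enorm_eq_ofReal_abs, ← ENNReal.ofReal_pow]
    _ ≤ _ := ofReal_le_lintegral_add_abs_deriv (fun t => (hw t).differentiableAt)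
        (fun t => sq_nonneg _) (y i)
    _ ≤ _ := lintegral_mono hbound

theorem lintegral_enorm_rpow_le_lintegral_sqW11Density_rpow {ι : Type*} [Fintype ι] {p : ℝ}
    (hp : (Fintype.card ι : ℝ).HolderConjugate p) {u : EuclideanSpace ℝ ι → ℝ}
    (hu : Differentiable ℝ u) :
    ∫⁻ x, ‖u x‖ₑ ^ (2 * p) ≤ (∫⁻ x, sqW11Density u x) ^ p := by
  classical
  have hmp := PiLp.volume_preserving_toLp ι
  have hemb := (MeasurableEquiv.toLp 2 (ι → ℝ)).measurableEmbedding
  rw [← hmp.lintegral_comp_emb hemb, ← hmp.lintegral_comp_emb hemb]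
  have hexp : (Fintype.card ι : ℝ) * (1 / (Fintype.card ι - 1)) = p := by
    have := hp.sub_one_mul_conj
    have := hp.sub_one_pos
    field_simp
    linarith
  have hpoint (y : ι → ℝ) : ‖u (WithLp.toLp 2 y)‖ₑ ^ (2 * p) ≤
      ∏ i, (∫⁻ t, sqW11Density u (WithLp.toLp 2 (update y i t))) ^
        (1 / (Fintype.card ι - 1 : ℝ)) := by
    calc ‖u (WithLp.toLp 2 y)‖ₑ ^ (2 * p)
        = ∏ _i : ι, (‖u (WithLp.toLp 2 y)‖ₑ ^ 2) ^ (1 / (Fintype.card ι - 1 : ℝ)) := by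
          rw [Finset.prod_const, Finset.card_univ, ← ENNReal.rpow_natCast, ← ENNReal.rpow_mul,
            ← ENNReal.rpow_natCast, ← ENNReal.rpow_mul, mul_comm (1 / _), hexp]
          norm_num
      _ ≤ _ := Finset.prod_le_prod' fun i _ => ENNReal.rpow_le_rpow
          (enorm_sq_le_lintegral_sqW11Density_update hu y i)
          (div_nonneg zero_le_one (by linarith [hp.lt]))
  exact (lintegral_mono hpoint).trans (lintegral_prod_lintegral_pow_le (fun _ => volume) hp
    ((measurable_sqW11Density hu.continuous).comp (MeasurableEquiv.toLp 2 (ι → ℝ)).measurable))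

theorem lintegral_enorm_rpow_le_of_le_three {u : E3 → ℝ} (hu : Differentiable ℝ u) {p : ℝ}
    (hp₂ : 2 ≤ p) (hp₃ : p ≤ 3) :
    ∫⁻ x, ‖u x‖ₑ ^ p ≤ (eLpNorm u 2 volume ^ 2) ^ (3 - p) *
      (eLpNorm u 2 volume ^ 2 + 2 * eLpNorm u 2 volume * eLpNorm (fderiv ℝ u) 2 volume) ^
        (3 / 2 * (p - 2)) := by
  have hGNS : ∫⁻ x, ‖u x‖ₑ ^ (3 : ℝ) ≤ (∫⁻ x, sqW11Density u x) ^ (3 / 2 : ℝ) := by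
    have hp : (Fintype.card (Fin 3) : ℝ).HolderConjugate (3 / 2) := by
      rw [Fintype.card_fin]; constructor <;> norm_num
    convert lintegral_enorm_rpow_le_lintegral_sqW11Density_rpow hp hu using 3
    norm_num
  calc ∫⁻ x, ‖u x‖ₑ ^ p = ∫⁻ x, ‖u x‖ₑ ^ ((1 - (p - 2)) * 2 + (p - 2) * 3) := by ring_nf
    _ ≤ (∫⁻ x, ‖u x‖ₑ ^ (2 : ℝ)) ^ (1 - (p - 2)) * (∫⁻ x, ‖u x‖ₑ ^ (3 : ℝ)) ^ (p - 2) :=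
        lintegral_rpow_convexComb_le hu.continuous.measurable.enorm.aemeasurable zero_le_two
          zero_le_three (by linarith) (by linarith)
    _ ≤ (eLpNorm u 2 volume ^ 2) ^ (3 - p) *
          ((∫⁻ x, sqW11Density u x) ^ (3 / 2 : ℝ)) ^ (p - 2) := by
        simp only [ENNReal.rpow_two, lintegral_enorm_sq_eq_eLpNorm_sq]
        rw [show 1 - (p - 2) = 3 - p by ring]
        gcongr
    _ ≤ _ := by
        rw [← ENNReal.rpow_mul]
        gcongr
        exact lintegral_sqW11Density_le volume hu.continuous

theorem integral_abs_rpow_le_of_inH1 {u : E3 → ℝ} (hu : InH1 u) {p : ℝ} (hp₂ : 2 ≤ p)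
    (hp₃ : p ≤ 3) :
    ∫ x, |u x| ^ p ≤ (∫ x, u x ^ 2) ^ (3 - p) *
      ((∫ x, u x ^ 2) + 2 * √(∫ x, u x ^ 2) * √(∫ x, ‖fderiv ℝ u x‖ ^ 2)) ^ (3 / 2 * (p - 2)) := by
  obtain ⟨hdiff, hu₂, hDu₂⟩ := hu
  have hS : eLpNorm u 2 volume = ENNReal.ofReal √(∫ x, u x ^ 2) := by
    simpa using eLpNorm_two_eq_ofReal_sqrt_integral hu₂
  have hA : eLpNorm (fderiv ℝ u) 2 volume = ENNReal.ofReal √(∫ x, ‖fderiv ℝ u x‖ ^ 2) := by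
    simpa [eLpNorm_norm] using eLpNorm_two_eq_ofReal_sqrt_integral hDu₂
  have hS0 : 0 ≤ ∫ x, u x ^ 2 := integral_nonneg fun x => sq_nonneg _
  have hlint := lintegral_enorm_rpow_le_of_le_three hdiff hp₂ hp₃
  have hR : (eLpNorm u 2 volume ^ 2) ^ (3 - p) *
      (eLpNorm u 2 volume ^ 2 + 2 * eLpNorm u 2 volume * eLpNorm (fderiv ℝ u) 2 volume) ^
        (3 / 2 * (p - 2)) = ENNReal.ofReal ((∫ x, u x ^ 2) ^ (3 - p) *
      ((∫ x, u x ^ 2) + 2 * √(∫ x, u x ^ 2) * √(∫ x, ‖fderiv ℝ u x‖ ^ 2)) ^ (3 / 2 * (p - 2))) := by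
    rw [ENNReal.ofReal_mul (by positivity), ← ENNReal.ofReal_rpow_of_nonneg hS0 (by linarith),
      ← ENNReal.ofReal_rpow_of_nonneg (by positivity) (by nlinarith),
      ENNReal.ofReal_add hS0 (by positivity), ENNReal.ofReal_mul (by positivity),
      ENNReal.ofReal_mul zero_le_two, ENNReal.ofReal_ofNat, hS, hA,
      ← ENNReal.ofReal_pow (Real.sqrt_nonneg _), Real.sq_sqrt hS0]
  rw [hR] at hlint
  rw [integral_eq_lintegral_of_nonneg_ae (ae_of_all _ fun x => by positivity)
    (hdiff.continuous.measurable.abs.pow_const p).aestronglyMeasurable]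
  refine ENNReal.toReal_le_of_le_ofReal (by positivity) (le_of_eq_of_le ?_ hlint)
  congr 1 with x
  rw [Real.enorm_eq_ofReal_abs, ENNReal.ofReal_rpow_of_nonneg (abs_nonneg _) (by linarith)]

theorem exists_mul_one_add_rpow_three_halves_le (c : ℝ) :
    ∃ K : ℝ, ∀ s : ℝ, 0 ≤ s → c * (1 + s) ^ (3 / 2 : ℝ) ≤ s ^ 2 / 4 + K := by
  refine ⟨16 * c ^ 4 + 1, fun s hs => ?_⟩
  set r := √(1 + s)
  have hr0 : 0 ≤ r := Real.sqrt_nonneg _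
  have hr2 : r ^ 2 = 1 + s := Real.sq_sqrt (by linarith)
  have h32 : (1 + s) ^ (3 / 2 : ℝ) = r ^ 3 := by
    rw [← hr2, ← Real.rpow_natCast r 2, ← Real.rpow_mul hr0, ← Real.rpow_natCast r 3]
    norm_num
  rw [h32, show s = r ^ 2 - 1 by linarith]
  -- `r⁴/4 - c r³ - r²/2 + 16c⁴ + 3/4 = r²(r - 4c)²/8 + (r²/4 - 4c²)² + (r²/4 - 1)²`
  nlinarith [mul_nonneg (sq_nonneg r) (sq_nonneg (r - 4 * c)), sq_nonneg (r ^ 2 / 4 - 4 * c ^ 2),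
    sq_nonneg (r ^ 2 / 4 - 1)]

theorem exists_mul_rpow_le_sq_div_four_add {c α β γ : ℝ} (hc : 0 ≤ c) (hα : 0 ≤ α) (hβ : 0 ≤ β)
    (hγ₀ : 0 ≤ γ) (hγ : γ ≤ 3 / 2) :
    ∃ K : ℝ, ∀ s : ℝ, 0 ≤ s → c * (α + β * s) ^ γ ≤ s ^ 2 / 4 + K := by
  set M := α + β + 1
  obtain ⟨K, hK⟩ := exists_mul_one_add_rpow_three_halves_le (c * M ^ γ)
  refine ⟨K, fun s hs => le_trans ?_ (hK s hs)⟩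
  calc c * (α + β * s) ^ γ ≤ c * (M * (1 + s)) ^ γ := by
        gcongr
        nlinarith
    _ = c * M ^ γ * (1 + s) ^ γ := by rw [Real.mul_rpow (by positivity) (by positivity), mul_assoc]
    _ ≤ c * M ^ γ * (1 + s) ^ (3 / 2 : ℝ) := by
        gcongr
        linarith

theorem exists_forall_le_Ifull {p : ℝ} (hp₂ : 2 < p) (hp₃ : p < 3) (ρ : ℝ) :
    ∃ K : ℝ, ∀ u : E3 → ℝ, InH1 u → ∫ x, u x ^ 2 = ρ ^ 2 →
      (∫ x, ‖fderiv ℝ u x‖ ^ 2) / 4 - K ≤ Ifull p u := by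
  obtain ⟨K, hK⟩ := exists_mul_rpow_le_sq_div_four_add (c := 1 / p * (ρ ^ 2) ^ (3 - p))
    (α := ρ ^ 2) (β := 2 * √(ρ ^ 2)) (γ := 3 / 2 * (p - 2)) (by positivity) (by positivity)
    (by positivity) (by nlinarith) (by nlinarith)
  refine ⟨K, fun u hu hmass => ?_⟩
  set A := ∫ x, ‖fderiv ℝ u x‖ ^ 2
  have hA : √A ^ 2 = A := Real.sq_sqrt (integral_nonneg fun x => sq_nonneg _)
  have hnonlocal : 0 ≤ ∫ x, ∫ y, (4 * π * ‖x - y‖)⁻¹ * u x ^ 2 * u y ^ 2 :=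
    integral_nonneg fun x => integral_nonneg fun y => by positivity
  have hlocal : 1 / p * ∫ x, |u x| ^ p ≤ A / 4 + K := by
    have hGN := integral_abs_rpow_le_of_inH1 hu hp₂.le hp₃.le
    rw [hmass] at hGN
    calc 1 / p * ∫ x, |u x| ^ p
        ≤ 1 / p * ((ρ ^ 2) ^ (3 - p) * (ρ ^ 2 + 2 * √(ρ ^ 2) * √A) ^ (3 / 2 * (p - 2))) := by
          gcongr
      _ ≤ √A ^ 2 / 4 + K := by
          rw [← mul_assoc]
          exact hK √A (Real.sqrt_nonneg _)
      _ = A / 4 + K := by rw [hA]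
  unfold Ifull
  linarith

theorem stmt7_general (p ρ : ℝ) (hp : 2 < p ∧ p < 3) :
    ∃ m : ℝ,
      (∀ u : E3 → ℝ, InH1 u → (∫ x, (u x) ^ 2) = ρ ^ 2 → m ≤ Ifull p u) ∧
      (∀ U : ℕ → E3 → ℝ,
        (∀ n, InH1 (U n) ∧ (∫ x, (U n x) ^ 2) = ρ ^ 2) →
        Tendsto (fun n => (∫ x, ‖fderiv ℝ (U n) x‖ ^ 2) + ∫ x, (U n x) ^ 2)
          atTop atTop →
        Tendsto (fun n => Ifull p (U n)) atTop atTop) := by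
  obtain ⟨K, hK⟩ := exists_forall_le_Ifull hp.1 hp.2 ρ
  refine ⟨-K, fun u hu hmass => ?_, fun U hU hT => ?_⟩
  · have hA : 0 ≤ ∫ x, ‖fderiv ℝ u x‖ ^ 2 := integral_nonneg fun x => sq_nonneg _
    linarith [hK u hu hmass]
  · have hgrad : Tendsto (fun n => ∫ x, ‖fderiv ℝ (U n) x‖ ^ 2) atTop atTop :=
      (tendsto_atTop_add_const_right _ (-ρ ^ 2) hT).congr fun n => by rw [(hU n).2]; ring
    refine tendsto_atTop_mono (fun n => hK (U n) (hU n).1 (hU n).2) ?_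
    exact tendsto_atTop_add_const_right _ (-K) (hgrad.atTop_div_const (by norm_num))

/-- For `p ∈ (2,3)` and `ρ > 0`, the functional `I` is bounded from below and
coercive on `M_ρ = {u ∈ H¹(ℝ³) : ∫ u² = ρ²}`. -/
theorem stmt7 (p ρ : ℝ) (hp : 2 < p ∧ p < 3) (hρ : 0 < ρ) :
    ∃ m : ℝ,
      (∀ u : E3 → ℝ, InH1 u → (∫ x, (u x) ^ 2) = ρ ^ 2 → m ≤ Ifull p u) ∧
      (∀ U : ℕ → E3 → ℝ,
        (∀ n, InH1 (U n) ∧ (∫ x, (U n x) ^ 2) = ρ ^ 2) →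
        Tendsto (fun n => (∫ x, ‖fderiv ℝ (U n) x‖ ^ 2) + ∫ x, (U n x) ^ 2)
          atTop atTop →
        Tendsto (fun n => Ifull p (U n)) atTop atTop) :=
  stmt7_general p ρ hp
end
end

section
/- Let D ⊂ R³ be a smooth bounded domain and p ∈ (2,3). There exists ρ_D > 0 such that for every ρ ∈ (0, ρ_D] and every u ∈ H^1_0(D) with ∫_D u² = ρ², one has I(u;D) ≥ (ρ²/4) μ₁(D) > 0, where I(u;D) = ½∫|∇u|² + ¼∫φ_u u² − (1/p)∫|u|^p and φ_u ≥ 0 is the Dirichlet Poisson term. In particular the constrained infimum of I on {u ∈ H^1_0(D) : |u|_{L²} = ρ} is strictly positive. -/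
open MeasureTheory Real

noncomputable section

/-- Positivity of the constrained energy on a bounded domain: for `p ∈ (2,3)`
there is `ρ_D > 0` such that for all `0 < ρ ≤ ρ_D` and all `u ∈ H¹₀(D)` with
`∫_D u² = ρ²` — assuming the Gagliardo–Nirenberg-type bound
`|u|_p^p ≤ C̃_D |∇u|₂² ρ^{p-2}`, the Poincaré inequality with first Dirichlet
eigenvalue `μ₁(D)`, and nonnegativity of the Poisson term — one has
`I(u;D) ≥ (ρ²/4) μ₁(D) > 0`. -/
theorem stmt13 (D : Set E3) (hD : IsOpen D) (hDbdd : Bornology.IsBounded D)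
    (p μ Ct : ℝ) (hp : 2 < p ∧ p < 3) (hμ : 0 < μ) (hCt : 0 < Ct) :
    ∃ ρD : ℝ, 0 < ρD ∧
      ∀ ρ : ℝ, 0 < ρ → ρ ≤ ρD →
        ∀ u φu : E3 → ℝ,
          (∫ x in D, (u x) ^ 2) = ρ ^ 2 →
          ((∫ x in D, |u x| ^ p) ≤
            Ct * (∫ x in D, ‖fderiv ℝ u x‖ ^ 2) * ρ ^ (p - 2)) →
          (μ * ∫ x in D, (u x) ^ 2 ≤ ∫ x in D, ‖fderiv ℝ u x‖ ^ 2) →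
          (0 ≤ ∫ x in D, φu x * (u x) ^ 2) →
          (ρ ^ 2 / 4 * μ ≤
            (1 / 2) * (∫ x in D, ‖fderiv ℝ u x‖ ^ 2) +
              (1 / 4) * (∫ x in D, φu x * (u x) ^ 2) -
              (1 / p) * (∫ x in D, |u x| ^ p)) ∧
          0 < ρ ^ 2 / 4 * μ := by
  obtain ⟨hp2, hp3⟩ := hp
  have hpe : (0:ℝ) < p - 2 := by linarith
  have hbase : (0:ℝ) < p / (4 * Ct) := by positivity
  refine ⟨(p / (4 * Ct)) ^ (1 / (p - 2)), Real.rpow_pos_of_pos hbase _, ?_⟩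
  intro ρ hρ hρD u φu hmass hGN hPoin hPhi
  set G := ∫ x in D, ‖fderiv ℝ u x‖ ^ 2 with hG
  have hGpos : 0 < G := lt_of_lt_of_le (by rw [hmass]; positivity) hPoin
  have hρpow : ρ ^ (p - 2) ≤ p / (4 * Ct) := by
    calc ρ ^ (p - 2) ≤ ((p / (4 * Ct)) ^ (1 / (p - 2))) ^ (p - 2) :=
          Real.rpow_le_rpow hρ.le hρD hpe.le
      _ = p / (4 * Ct) := by
          rw [← Real.rpow_mul hbase.le, one_div_mul_cancel hpe.ne', Real.rpow_one]
  have hp0 : (0:ℝ) < p := by linarith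
  have h1 : (∫ x in D, |u x| ^ p) ≤ p * G / 4 := by
    calc (∫ x in D, |u x| ^ p) ≤ Ct * G * ρ ^ (p - 2) := hGN
      _ ≤ Ct * G * (p / (4 * Ct)) := by
          apply mul_le_mul_of_nonneg_left hρpow (by positivity)
      _ = p * G / 4 := by field_simp
  have h2 : (1 / p) * (∫ x in D, |u x| ^ p) ≤ G / 4 := by
    rw [div_mul_eq_mul_div, one_mul, div_le_div_iff₀ hp0 (by norm_num : (0:ℝ) < 4)]
    nlinarith [h1]
  have hPoin' : μ * ρ ^ 2 ≤ G := by rw [← hmass]; exact hPoin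
  exact ⟨by nlinarith, by positivity⟩
end
end
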